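/- arXiv:math/0510139 — 2 statements merged into one kernel-verified Lean document; each statement's English description precedes it below -/
import Mathlib

section
/- Let X be a complete length space, p ∈ X, and r > 0. Assume that G(p,r,2r) is finitely generated and that the image Im{ π₁(B̄_p(r), p) → π₁(X, p) } of the inclusion-induced homomorphism is a finitely presented group. Then ρ_p(r) < ∞; that is, there exists R > 0 such that every loop based at p with image in the closed ball B̄_p(r) that is nullhomotopic in X is nullhomotopic inside the open ball B_p(R). -/
open Metric unitInterval CategoryTheory
open scoped FundamentalGroupoid ENNReal Manifold

universe u

noncomputable section

/-- The length of a path in a pseudo-emetric space, as the total variation of the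
parametrization. -/
def pathLength {X : Type u} [PseudoEMetricSpace X] {x y : X} (γ : Path x y) : ℝ≥0∞ :=
  eVariationOn γ Set.univ

/-- A (pseudo-e)metric space is a *length space* if the distance between any two points is
the infimum of the lengths of paths joining them. -/
def IsLengthSpace (X : Type u) [PseudoEMetricSpace X] : Prop :=
  ∀ x y : X, edist x y = ⨅ γ : Path x y, pathLength γ

/-- Two loops are homotopic (rel endpoints) *within* the set `S` if there is a path homotopy
between them whose image is contained in `S`. -/
def HomotopicIn {X : Type u} [TopologicalSpace X] {x y : X} (γ₁ γ₂ : Path x y) (S : Set X) :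
    Prop :=
  ∃ H : Path.Homotopy γ₁ γ₂, ∀ z : I × I, H z ∈ S

/-- A loop is nullhomotopic within the set `S`. -/
def NullHomotopicIn {X : Type u} [TopologicalSpace X] {x : X} (γ : Path x x) (S : Set X) :
    Prop :=
  HomotopicIn γ (Path.refl x) S

/-- The homomorphism on fundamental groups induced by a continuous map. -/
def indHom {X Y : Type u} [TopologicalSpace X] [TopologicalSpace Y]
    (f : C(X, Y)) (x : X) : FundamentalGroup X x →* FundamentalGroup Y (f x) :=
  Functor.mapEnd (FundamentalGroupoid.mk x)
    (πₘ (show TopCat.of X ⟶ TopCat.of Y from TopCat.ofHom f))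

/-- The class of a loop in the fundamental group. -/
def pathClass {X : Type u} [TopologicalSpace X] {x : X} (γ : Path x x) :
    FundamentalGroup X x :=
  @FundamentalGroup.fromPath (TopCat.of X) _ x ⟦γ⟧

/-- The basepoint `p` as a point of the closed ball `B̄_p(r)`. -/
def pcb {X : Type u} [MetricSpace X] (p : X) {r : ℝ} (h0 : 0 ≤ r) : closedBall p r :=
  ⟨p, mem_closedBall_self h0⟩

/-- The basepoint `p` as a point of the open ball `B_p(R)`. -/
def ctr {X : Type u} [MetricSpace X] (p : X) {R : ℝ} (hR : 0 < R) : ball p R :=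
  ⟨p, mem_ball_self hR⟩

/-- The inclusion of the closed ball `B̄_p(r)` into the open ball `B_p(R)`, `r < R`. -/
def cbInclusion {X : Type u} [MetricSpace X] (p : X) {r R : ℝ} (h : r < R) :
    C(closedBall p r, ball p R) :=
  ⟨fun z => ⟨z.1, mem_ball.mpr (lt_of_le_of_lt (mem_closedBall.mp z.2) h)⟩,
    Continuous.subtype_mk continuous_subtype_val _⟩

/-- The geometric semi-local fundamental group `G(p,r,R)`: the image of
`π₁(B̄_p(r), p) → π₁(B_p(R), p)`, as a subgroup of `π₁(B_p(R), p)`. -/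
def G {X : Type u} [MetricSpace X] (p : X) {r R : ℝ} (h0 : 0 ≤ r) (hrR : r < R) :
    Subgroup (FundamentalGroup (ball p R) (ctr p (h0.trans_lt hrR))) :=
  (indHom (cbInclusion p hrR) (pcb p h0)).range

/-- The homomorphism `π₁(B_p(R), p) → π₁(X, p)` induced by inclusion. -/
def toAmb {X : Type u} [MetricSpace X] (p : X) {R : ℝ} (hR : 0 < R) :
    FundamentalGroup (ball p R) (ctr p hR) →* FundamentalGroup X p :=
  indHom ⟨Subtype.val, continuous_subtype_val⟩ (ctr p hR)

/-- The homomorphism `π₁(B̄_p(r), p) → π₁(X, p)` induced by inclusion. -/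
def cbToAmb {X : Type u} [MetricSpace X] (p : X) {r : ℝ} (h0 : 0 ≤ r) :
    FundamentalGroup (closedBall p r) (pcb p h0) →* FundamentalGroup X p :=
  indHom ⟨Subtype.val, continuous_subtype_val⟩ (pcb p h0)

end

/-- A group is finitely presented. -/
def IsFinitelyPresented (G : Type*) [Group G] : Prop :=
  ∃ (m : ℕ) (rels : Set (FreeGroup (Fin m))), rels.Finite ∧ Nonempty (PresentedGroup rels ≃* G)

/-!
Let `K` be the kernel of the surjection from `G(p,r,2r)` onto the image of `π₁(B̄_p(r), p)` in
`π₁(X, p)`. The kernel of a surjection from a finitely generated group onto a finitely presented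
one is the normal closure of finitely many elements (Tietze), so `K` is normally generated by
finitely many loops of `B_p(2r)` that are nullhomotopic in `X`. The images of these finitely many
nullhomotopies are compact, hence all lie in one ball `B_p(R)`, so every element of `K` is trivial
in `π₁(B_p(R), p)`. A loop in `B̄_p(r)` that is nullhomotopic in `X` represents an element of `K`.
-/

namespace Group.IsFinitelyPresented

variable {Γ H : Type*} [Group Γ] [Group H]

theorem ker_isFinitelyNormallyGenerated_of_freeGroup {β : Type*} [Finite β]
    [hΓ : IsFinitelyPresented Γ] (ψ : FreeGroup β →* Γ) (hψ : Function.Surjective ψ) :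
    ψ.ker.IsFinitelyNormallyGenerated := by
  obtain ⟨n, φ, hφ, rels, hrels, hker⟩ := hΓ
  obtain ⟨α, hα⟩ : ∃ α : FreeGroup (Fin n) →* FreeGroup β, ψ.comp α = φ :=
    ⟨FreeGroup.lift fun i => Function.surjInv hψ (φ (.of i)),
      FreeGroup.ext_hom _ _ fun i => by simp [Function.surjInv_eq]⟩
  obtain ⟨τ, hτ⟩ : ∃ τ : FreeGroup β →* FreeGroup (Fin n), φ.comp τ = ψ :=
    ⟨FreeGroup.lift fun b => Function.surjInv hφ (ψ (.of b)),
      FreeGroup.ext_hom _ _ fun b => by simp [Function.surjInv_eq]⟩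
  -- modulo the second family, `α ∘ τ` is the identity, so `ψ w = 1` puts `w` in the normal
  -- closure of the first one
  set T := α '' rels ∪ Set.range fun b => (FreeGroup.of b)⁻¹ * α (τ (.of b))
  have hαrels : (Subgroup.normalClosure rels).map α ≤ Subgroup.normalClosure T :=
    (Subgroup.map_normalClosure_le rels α).trans
      (Subgroup.normalClosure_mono Set.subset_union_left)
  refine ⟨T, (hrels.image α).union (Set.finite_range _), le_antisymm ?_ ?_⟩
  · refine Subgroup.normalClosure_le_normal ?_
    rintro _ (⟨u, hu, rfl⟩ | ⟨b, rfl⟩) <;> rw [SetLike.mem_coe, MonoidHom.mem_ker]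
    · rw [← MonoidHom.comp_apply, hα, ← MonoidHom.mem_ker, ← hker]
      exact Subgroup.subset_normalClosure hu
    · rw [map_mul, map_inv, ← MonoidHom.comp_apply ψ α, hα, ← MonoidHom.comp_apply φ τ, hτ,
        inv_mul_cancel]
  · let q := QuotientGroup.mk' (Subgroup.normalClosure T)
    have hq : q.comp (α.comp τ) = q := FreeGroup.ext_hom _ _ fun b =>
      (QuotientGroup.eq.2 <| Subgroup.subset_normalClosure <|
        Set.mem_union_right (α '' rels) (Set.mem_range_self b)).symm
    intro w hw
    have hτw : τ w ∈ Subgroup.normalClosure rels := by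
      rwa [hker, MonoidHom.mem_ker, ← MonoidHom.comp_apply, hτ]
    rw [← QuotientGroup.eq_one_iff]
    change q w = 1
    rw [← hq]
    exact (QuotientGroup.eq_one_iff _).2 (hαrels ⟨τ w, hτw, rfl⟩)

theorem ker_isFinitelyNormallyGenerated [IsFinitelyPresented Γ] [hH : Group.FG H]
    (f : H →* Γ) (hf : Function.Surjective f) : f.ker.IsFinitelyNormallyGenerated := by
  obtain ⟨β, _, ε, hε⟩ := Group.fg_iff_exists_freeGroup_hom_surjective_finite.1 hH
  have hker :=
    (ker_isFinitelyNormallyGenerated_of_freeGroup (f.comp ε) (hf.comp hε)).map hε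
  rwa [← MonoidHom.comap_ker, Subgroup.map_comap_eq_self_of_surjective hε] at hker

end Group.IsFinitelyPresented

theorem IsFinitelyPresented.group_isFinitelyPresented {Γ : Type*} [Group Γ]
    (h : IsFinitelyPresented Γ) : Group.IsFinitelyPresented Γ := by
  obtain ⟨m, rels, hrels, ⟨e⟩⟩ := h
  have := hrels.to_subtype
  exact .equiv e

section Homotopy

variable {X Y Z : Type u} [TopologicalSpace X] [TopologicalSpace Y] [TopologicalSpace Z]

def Path.codRestrict {x y : X} (γ : Path x y) {S : Set X} (hS : ∀ t, γ t ∈ S) :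
    Path (⟨x, γ.source ▸ hS 0⟩ : S) ⟨y, γ.target ▸ hS 1⟩ where
  toFun t := ⟨γ t, hS t⟩
  continuous_toFun := γ.continuous.subtype_mk _
  source' := Subtype.ext γ.source
  target' := Subtype.ext γ.target

theorem homotopic_iff_homotopicIn {S : Set X} {a b : S} (δ₁ δ₂ : Path a b) :
    δ₁.Homotopic δ₂ ↔
      HomotopicIn (δ₁.map continuous_subtype_val) (δ₂.map continuous_subtype_val) S := by
  refine ⟨fun ⟨H⟩ => ⟨H.map ⟨_, continuous_subtype_val⟩, fun z => (H z).2⟩,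
    fun ⟨H, hH⟩ => ⟨?_⟩⟩
  exact
    { toFun z := ⟨H z, hH z⟩
      continuous_toFun := H.continuous.subtype_mk _
      map_zero_left t := Subtype.ext (H.apply_zero t)
      map_one_left t := Subtype.ext (H.apply_one t)
      prop' t s hs := Subtype.ext (H.prop' t s hs) }

theorem Path.Homotopic.eventually_homotopicIn_ball {W : Type*} [PseudoMetricSpace W] {x y : W}
    {γ₁ γ₂ : Path x y} (h : γ₁.Homotopic γ₂) (p : W) :
    ∀ᶠ R in Filter.atTop, HomotopicIn γ₁ γ₂ (ball p R) := by
  obtain ⟨H⟩ := h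
  obtain ⟨R₀, hR₀⟩ := (isCompact_range H.continuous).isBounded.subset_ball p
  exact Filter.eventually_atTop.2
    ⟨R₀, fun R hR => ⟨H, fun z => ball_subset_ball hR (hR₀ (Set.mem_range_self z))⟩⟩

theorem pathClass_eq_one_iff {x : X} (γ : Path x x) :
    pathClass γ = 1 ↔ γ.Homotopic (Path.refl x) :=
  Quotient.eq

theorem exists_pathClass_eq {x : X} (g : FundamentalGroup X x) :
    ∃ γ : Path x x, pathClass γ = g :=
  Quotient.exists_rep (show Path.Homotopic.Quotient x x from g)

theorem indHom_pathClass (f : C(X, Y)) {x : X} (γ : Path x x) :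
    indHom f x (pathClass γ) = pathClass (γ.map f.continuous) :=
  (Path.Homotopic.Quotient.mk_map γ f).symm

theorem indHom_indHom (f : C(X, Y)) (g : C(Y, Z)) (x : X) (a : FundamentalGroup X x) :
    indHom g (f x) (indHom f x a) = indHom (g.comp f) x a := by
  obtain ⟨γ, rfl⟩ := exists_pathClass_eq a
  exact (indHom_pathClass g _).trans (indHom_pathClass (g.comp f) γ).symm

theorem indHom_inclusion_pathClass_eq_one_iff {S T : Set X} (hST : S ⊆ T) {a : S}
    (δ : Path a a) : indHom (ContinuousMap.inclusion hST) a (pathClass δ) = 1 ↔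
      NullHomotopicIn (δ.map continuous_subtype_val) T := by
  rw [indHom_pathClass, pathClass_eq_one_iff, homotopic_iff_homotopicIn]
  rfl

end Homotopy

section Balls

variable {X : Type u} [MetricSpace X] (p : X)

theorem eventually_indHom_inclusion_ball_eq_one {a : ℝ} (ha : 0 < a)
    {g : FundamentalGroup (ball p a) (ctr p ha)} (hg : toAmb p ha g = 1) :
    ∀ᶠ R in Filter.atTop, ∀ h : a ≤ R,
      indHom (ContinuousMap.inclusion (ball_subset_ball h)) (ctr p ha) g = 1 := by
  obtain ⟨δ, rfl⟩ := exists_pathClass_eq g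
  have hδ : (δ.map continuous_subtype_val).Homotopic (Path.refl p) :=
    (pathClass_eq_one_iff _).1 ((indHom_pathClass _ δ).symm.trans hg)
  filter_upwards [hδ.eventually_homotopicIn_ball p] with R hR h
  exact (indHom_inclusion_pathClass_eq_one_iff _ δ).2 hR

theorem exists_ker_le_ker_indHom_inclusion_ball {a : ℝ} (ha : 0 < a)
    {K : Subgroup (FundamentalGroup (ball p a) (ctr p ha))}
    (hK : ((toAmb p ha).subgroupMap K).ker.IsFinitelyNormallyGenerated) :
    ∃ R, ∃ h : a ≤ R, ((toAmb p ha).subgroupMap K).ker ≤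
      ((indHom (ContinuousMap.inclusion (ball_subset_ball h)) (ctr p ha)).comp K.subtype).ker := by
  obtain ⟨T, hT, hTker⟩ := hK
  have hT1 (t : K) (ht : t ∈ T) : toAmb p ha t = 1 :=
    congrArg Subtype.val (hTker ▸ Subgroup.subset_normalClosure ht : t ∈ _)
  obtain ⟨R, hR, haR⟩ := ((hT.eventually_all.2 fun t ht =>
    eventually_indHom_inclusion_ball_eq_one p ha (hT1 t ht)).and
      (Filter.eventually_ge_atTop a)).exists
  exact ⟨R, haR, hTker ▸ Subgroup.normalClosure_le_normal fun t ht => hR t ht haR⟩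

theorem toAmb_comp_indHom_cbInclusion {r R : ℝ} (h0 : 0 ≤ r) (hrR : r < R) :
    (toAmb p (h0.trans_lt hrR)).comp (indHom (cbInclusion p hrR) (pcb p h0)) = cbToAmb p h0 :=
  MonoidHom.ext fun c => indHom_indHom (cbInclusion p hrR) ⟨_, continuous_subtype_val⟩ _ c

theorem range_cbToAmb {r R : ℝ} (h0 : 0 ≤ r) (hrR : r < R) :
    (cbToAmb p h0).range = (G p h0 hrR).map (toAmb p (h0.trans_lt hrR)) := by
  rw [← toAmb_comp_indHom_cbInclusion p h0 hrR]
  exact MonoidHom.range_comp _ _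

theorem cbToAmb_pathClass_codRestrict {r : ℝ} (h0 : 0 ≤ r) {γ : Path p p}
    (hγ : ∀ t, γ t ∈ closedBall p r) :
    cbToAmb p h0 (pathClass (γ.codRestrict hγ)) = pathClass γ :=
  indHom_pathClass _ _

theorem nullHomotopicIn_ball_iff {r R : ℝ} (h0 : 0 ≤ r) (hrR : r < R) {γ : Path p p}
    (hγ : ∀ t, γ t ∈ closedBall p r) :
    NullHomotopicIn γ (ball p R) ↔
      indHom (cbInclusion p hrR) (pcb p h0) (pathClass (γ.codRestrict hγ)) = 1 :=
  (indHom_inclusion_pathClass_eq_one_iff (closedBall_subset_ball hrR) (γ.codRestrict hγ)).symm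

end Balls

theorem stmt5 {X : Type u} [MetricSpace X]
    (p : X) (r : ℝ) (h0 : 0 < r)
    (hfg : Group.FG (G p h0.le (by linarith : r < 2 * r)))
    (hfp : IsFinitelyPresented (cbToAmb p h0.le).range) :
    ∃ R > 0, ∀ γ : Path p p, (∀ t, γ t ∈ closedBall p r) →
      γ.Homotopic (Path.refl p) → NullHomotopicIn γ (ball p R) := by
  have hr2 : r < 2 * r := by linarith
  set Gr := G p h0.le hr2
  let ψ := (toAmb p (h0.trans hr2)).subgroupMap Gr
  have : Group.IsFinitelyPresented (Gr.map (toAmb p (h0.trans hr2))) := by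
    rw [← range_cbToAmb]
    exact hfp.group_isFinitelyPresented
  obtain ⟨R, h2R, hker⟩ := exists_ker_le_ker_indHom_inclusion_ball p _ <|
    Group.IsFinitelyPresented.ker_isFinitelyNormallyGenerated ψ
      (MonoidHom.subgroupMap_surjective _ _)
  refine ⟨R, by linarith, fun γ hγ hnull => ?_⟩
  set c := pathClass (γ.codRestrict hγ)
  have hc : toAmb p (h0.trans hr2) (indHom (cbInclusion p hr2) (pcb p h0.le) c) = 1 :=
    (DFunLike.congr_fun (toAmb_comp_indHom_cbInclusion p h0.le hr2) c).trans <|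
      (cbToAmb_pathClass_codRestrict p h0.le hγ).trans ((pathClass_eq_one_iff γ).2 hnull)
  exact (nullHomotopicIn_ball_iff p h0.le (hr2.trans_le h2R) hγ).2 <|
    (indHom_indHom (cbInclusion p hr2) (ContinuousMap.inclusion (ball_subset_ball h2R)) _
      c).symm.trans (MonoidHom.mem_ker.1 (hker (Subtype.ext hc : ψ ⟨_, c, rfl⟩ = 1)))
end

section
/- Let Y be a complete length space whose closed metric balls are compact, let y₀ ∈ Y, and let k > 0. Suppose that for every r > 0 and every δ > 0, every loop based at y₀ with image in the closed ball B̄_{y₀}(r) is homotopic, within the open ball B_{y₀}((k+1)r), to a finite product of δ-loops (i.e., G(y₀, r, (k+1)r, δ) is trivial for all r, δ > 0). Then for every path-connected covering space p : Ỹ → Y with ỹ₀ ∈ p⁻¹(y₀), the induced homomorphism p_* : π₁(Ỹ, ỹ₀) → π₁(Y, y₀) is surjective; consequently every path-connected covering of Y is a one-sheeted (trivial) covering, so Y is its own universal cover. -/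
open Metric unitInterval CategoryTheory
open scoped FundamentalGroupoid ENNReal Manifold

universe u

/-- A `δ`-loop based at `p`: a loop of the form `α * β * α⁻¹` where `β` is a closed path lying
in some ball of radius `δ` and `α` is a path from `p` to `β 0`. -/
def IsDeltaLoop {X : Type u} [MetricSpace X] {p : X} (δ : ℝ) (γ : Path p p) : Prop :=
  ∃ (z c : X) (α : Path p z) (β : Path z z),
    (∀ t, β t ∈ ball c δ) ∧ γ = (α.trans β).trans α.symm

/-- The concatenation of a finite list of loops based at `p`. -/
noncomputable def loopProd {X : Type u} [TopologicalSpace X] {p : X} (l : List (Path p p)) : Path p p :=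
  l.foldr Path.trans (Path.refl p)

/-- Triviality of the relative `δ`-group `G(x, r, R, δ)`: every loop based at `x` with image in
the closed ball `B̄_x(r)` is homotopic, within the open ball `B_x(R)`, to a finite product of
`δ`-loops. -/
def DeltaTrivial {X : Type u} [MetricSpace X] (x : X) (r R δ : ℝ) : Prop :=
  ∀ γ : Path x x, (∀ t, γ t ∈ closedBall x r) →
    ∃ l : List (Path x x), (∀ γ' ∈ l, IsDeltaLoop δ γ') ∧
      HomotopicIn γ (loopProd l) (ball x R)


/-! A loop lying in an evenly covered open set lifts to loops, hence has trivial monodromy, and so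
does any conjugate `α * β * α⁻¹` of it. Take a Lebesgue number `2δ` for the evenly covered open
sets over the compact ball `B̄_{y₀}((k+1)r)`: every `δ`-loop whose image meets that ball has its
small part `β` inside one of them. By hypothesis, each loop in `B̄_{y₀}(r)` is homotopic within
`B_{y₀}((k+1)r)` to a product of such `δ`-loops, so the monodromy action of `π₁(Y, y₀)` on the
fibre over `y₀` is trivial. Thus every loop at `y₀` lifts to a loop at `ỹ₀`, which is the
surjectivity of `p_*`; and as `Ỹ` is path connected, any two points of the fibre are joined by a
lift of a loop, so the fibre is a single point, and so is every fibre, by transport along paths: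
a length space is path connected, its distances being finite.
-/

open Function

section Covering

variable {E X : Type*} [TopologicalSpace E] [TopologicalSpace X] {p : E → X}

theorem apply_one_eq_apply_zero_of_evenlyCovered {F : Type*} [TopologicalSpace F]
    [DiscreteTopology F] {U : Set X} (H : p ⁻¹' U ≃ₜ U × F) (hH : ∀ e, (H e).1.1 = p e)
    {Γ : C(I, E)} (hΓU : ∀ t, p (Γ t) ∈ U) (hΓ : p (Γ 1) = p (Γ 0)) : Γ 1 = Γ 0 := by
  let Γ' : C(I, p ⁻¹' U) := ⟨fun t => ⟨Γ t, hΓU t⟩, by fun_prop⟩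
  have hfst : (H (Γ' 1)).1 = (H (Γ' 0)).1 := Subtype.ext (by rw [hH, hH]; exact hΓ)
  have hsnd : (H (Γ' 1)).2 = (H (Γ' 0)).2 :=
    PreconnectedSpace.constant inferInstance
      ((continuous_snd.comp H.continuous).comp Γ'.continuous)
  exact congrArg Subtype.val (H.injective (Prod.ext hfst hsnd))

namespace IsCoveringMap

variable (cov : IsCoveringMap p)
include cov

theorem monodromy_mk_eq_id_of_evenlyCovered {x : X} (γ : Path x x) {F : Type*}
    [TopologicalSpace F] [DiscreteTopology F] {U : Set X} (H : p ⁻¹' U ≃ₜ U × F)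
    (hH : ∀ e, (H e).1.1 = p e) (hγU : ∀ t, γ t ∈ U) : cov.monodromy (.mk γ) = id := by
  funext e
  refine Subtype.ext ?_
  have hlift : ∀ t, p (cov.liftPath γ e (γ.source.trans e.2.symm) t) = γ t :=
    fun t => congrFun (cov.liftPath_lifts ..) t
  have := apply_one_eq_apply_zero_of_evenlyCovered H hH (fun t => (hlift t).symm ▸ hγU t)
    (by rw [hlift, hlift, γ.source, γ.target])
  exact this.trans (cov.liftPath_zero ..)

theorem monodromy_conj_eq_id {x y : X} (α : Path.Homotopic.Quotient x y)
    {β : Path.Homotopic.Quotient y y} (hβ : cov.monodromy β = id) :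
    cov.monodromy ((α.trans β).trans α.symm) = id := by
  funext e
  rw [cov.monodromy_trans_apply, cov.monodromy_trans_apply, hβ, id, ← cov.monodromy_trans_apply,
    Path.Homotopic.Quotient.trans_symm, cov.monodromy_refl, id]

theorem monodromy_mk_loopProd_eq_id {x : X} (l : List (Path x x))
    (hl : ∀ γ ∈ l, cov.monodromy (.mk γ) = id) : cov.monodromy (.mk (loopProd l)) = id := by
  induction l with
  | nil => exact cov.monodromy_refl
  | cons γ l ih =>
    funext e
    change cov.monodromy ((Path.Homotopic.Quotient.mk γ).trans (.mk (loopProd l))) e = e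
    rw [cov.monodromy_trans_apply, hl γ List.mem_cons_self,
      ih fun γ' hγ' => hl γ' (List.mem_cons_of_mem _ hγ'), id, id]

theorem subsingleton_fiber_of_monodromy_eq_id [PathConnectedSpace E] {x : X}
    (h : ∀ γ : Path.Homotopic.Quotient x x, cov.monodromy γ = id) : Subsingleton (p ⁻¹' {x}) := by
  refine ⟨fun e e' => ?_⟩
  let Γ : Path.Homotopic.Quotient e.1 e'.1 := .mk (PathConnectedSpace.somePath e.1 e'.1)
  have hΓ : cov.monodromy ((Γ.map ⟨p, cov.continuous⟩).cast e.2.symm e'.2.symm) e = e' :=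
    cov.monodromy_eq_of_map_eq Γ rfl
  rwa [h] at hΓ

theorem bijective_of_monodromy_eq_id [PathConnectedSpace E] [PathConnectedSpace X] {x : X}
    (h : ∀ γ : Path.Homotopic.Quotient x x, cov.monodromy γ = id) (e₀ : E) (he₀ : p e₀ = x) :
    Bijective p := by
  have := cov.subsingleton_fiber_of_monodromy_eq_id h
  let γ (y : X) : Path.Homotopic.Quotient x y := .mk (PathConnectedSpace.somePath x y)
  refine ⟨fun e e' hee' => ?_, fun y => ⟨_, (cov.monodromy (γ y) ⟨e₀, he₀⟩).2⟩⟩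
  have := (cov.monodromy_bijective (γ (p e'))).surjective.subsingleton
  exact congrArg Subtype.val (Subsingleton.elim (α := p ⁻¹' {p e'}) ⟨e, hee'⟩ ⟨e', rfl⟩)

theorem surjective_map_of_monodromy_eq_id (e₀ : E)
    (h : ∀ γ : Path.Homotopic.Quotient (p e₀) (p e₀), cov.monodromy γ = id) :
    Surjective (FundamentalGroup.map ⟨p, cov.continuous⟩ e₀) := by
  intro γ
  have hγ : (cov.monodromy γ ⟨e₀, rfl⟩ : E) = e₀ := by rw [h]; rfl
  refine ⟨(cov.liftPathQuotient γ ⟨e₀, rfl⟩).cast rfl hγ.symm, ?_⟩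
  change ((cov.liftPathQuotient γ ⟨e₀, rfl⟩).cast rfl hγ.symm).map ⟨p, cov.continuous⟩ = γ
  rw [Path.Homotopic.Quotient.map_cast, cov.map_liftPathQuotient]
  induction γ using Path.Homotopic.Quotient.ind with
  | mk γ => rfl

end IsCoveringMap

end Covering

theorem range_subset_range_loopProd {X : Type u} [TopologicalSpace X] {x : X}
    {l : List (Path x x)} {γ : Path x x} (hγ : γ ∈ l) : Set.range γ ⊆ Set.range (loopProd l) := by
  induction l with
  | nil => cases hγ
  | cons γ' l ih =>
    change Set.range γ ⊆ Set.range (γ'.trans (loopProd l))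
    rw [Path.trans_range]
    rcases List.mem_cons.1 hγ with rfl | hγ
    · exact Set.subset_union_left
    · exact (ih hγ).trans Set.subset_union_right

theorem IsDeltaLoop.exists_range_subset_ball {X : Type u} [MetricSpace X] {x : X} {δ : ℝ}
    {γ : Path x x} (hγ : IsDeltaLoop δ γ) :
    ∃ z ∈ Set.range γ, ∃ β : Path z z, Set.range β ⊆ ball z (2 * δ) ∧
      ∃ α : Path x z, γ = (α.trans β).trans α.symm := by
  obtain ⟨z, c, α, β, hβ, rfl⟩ := hγ
  refine ⟨z, ?_, β, ?_, α, rfl⟩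
  · rw [Path.trans_range, Path.trans_range]
    exact Or.inl (Or.inr ⟨0, β.source⟩)
  · rintro _ ⟨t, rfl⟩
    calc dist (β t) z ≤ dist (β t) c + dist z c := dist_triangle_right _ _ _
      _ < δ + δ := add_lt_add (hβ t) (β.source ▸ hβ 0)
      _ = 2 * δ := by ring

namespace IsCoveringMap

variable {E : Type*} {X : Type u} [TopologicalSpace E] [MetricSpace X] {p : E → X}
  (cov : IsCoveringMap p)
include cov

theorem exists_pos_monodromy_eq_id_of_isDeltaLoop [ProperSpace X] (x : X) (R : ℝ) :
    ∃ δ > 0, ∀ γ : Path x x, IsDeltaLoop δ γ → Set.range γ ⊆ closedBall x R →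
      cov.monodromy (.mk γ) = id := by
  -- `(cov y).2.choose` is an evenly covered open neighbourhood of `y`
  obtain ⟨ε, hε, hleb⟩ := lebesgue_number_lemma_of_metric (isCompact_closedBall x R)
    (fun y => (cov y).2.choose_spec.2.1)
    (fun y _ => Set.mem_iUnion.2 ⟨y, (cov y).2.choose_spec.1⟩)
  refine ⟨ε / 2, by positivity, fun γ hγ hγR => ?_⟩
  obtain ⟨z, hz, β, hβ, α, rfl⟩ := hγ.exists_range_subset_ball
  obtain ⟨y, hy⟩ := hleb z (hγR hz)
  obtain ⟨-, -, -, H, hH⟩ := (cov y).2.choose_spec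
  have : DiscreteTopology (p ⁻¹' {y}) := (cov y).1
  have hβ' : cov.monodromy (.mk β) = id :=
    cov.monodromy_mk_eq_id_of_evenlyCovered β H hH fun t =>
      hy (mul_div_cancel₀ ε two_ne_zero ▸ hβ ⟨t, rfl⟩)
  exact cov.monodromy_conj_eq_id (.mk α) hβ'

theorem monodromy_mk_eq_id_of_deltaTrivial [ProperSpace X] {x : X} {r R : ℝ}
    (htriv : ∀ δ > 0, DeltaTrivial x r R δ) (γ : Path x x) (hγ : ∀ t, γ t ∈ closedBall x r) :
    cov.monodromy (.mk γ) = id := by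
  obtain ⟨δ, hδ, hsmall⟩ := cov.exists_pos_monodromy_eq_id_of_isDeltaLoop x R
  obtain ⟨l, hl, H, hHR⟩ := htriv δ hδ γ hγ
  have hlR : Set.range (loopProd l) ⊆ closedBall x R := by
    rintro _ ⟨t, rfl⟩
    exact ball_subset_closedBall (H.apply_one t ▸ hHR (1, t))
  rw [Path.Homotopic.Quotient.eq.2 ⟨H⟩]
  exact cov.monodromy_mk_loopProd_eq_id l fun γ' hγ' =>
    hsmall γ' (hl γ' hγ') ((range_subset_range_loopProd hγ').trans hlR)

theorem monodromy_eq_id_of_forall_deltaTrivial [ProperSpace X] {x : X}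
    (htriv : ∀ r > 0, ∃ R, ∀ δ > 0, DeltaTrivial x r R δ) (γ : Path.Homotopic.Quotient x x) :
    cov.monodromy γ = id := by
  induction γ with
  | mk γ =>
    obtain ⟨r, hr⟩ := (isCompact_range γ.continuous).isBounded.subset_closedBall x
    obtain ⟨R, hR⟩ := htriv (max r 1) (by positivity)
    exact cov.monodromy_mk_eq_id_of_deltaTrivial hR γ fun t =>
      closedBall_subset_closedBall (le_max_left r 1) (hr ⟨t, rfl⟩)

end IsCoveringMap

theorem IsLengthSpace.pathConnectedSpace {X : Type u} [PseudoMetricSpace X] [Nonempty X]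
    (hX : IsLengthSpace X) : PathConnectedSpace X := by
  refine ⟨inferInstance, fun x y => ?_⟩
  by_contra hxy
  have : IsEmpty (Path x y) := ⟨fun γ => hxy ⟨γ⟩⟩
  exact edist_ne_top x y ((hX x y).trans (iInf_of_empty _))

theorem stmt10_general {Y : Type u} [MetricSpace Y] [ProperSpace Y]
    (hlen : IsLengthSpace Y) (y₀ : Y) (k : ℝ)
    (htriv : ∀ r, 0 < r → ∀ δ, 0 < δ → DeltaTrivial y₀ r ((k + 1) * r) δ) :
    ∀ (E : Type u) [TopologicalSpace E] [PathConnectedSpace E] (q : E → Y)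
      (hq : IsCoveringMap q) (e₀ : E), q e₀ = y₀ →
      Function.Surjective (indHom ⟨q, hq.continuous⟩ e₀) ∧ Function.Bijective q := by
  intro E _ _ q hq e₀ he₀
  subst he₀
  have : Nonempty Y := ⟨q e₀⟩
  have := hlen.pathConnectedSpace
  have hmon := hq.monodromy_eq_id_of_forall_deltaTrivial fun r hr => ⟨_, htriv r hr⟩
  exact ⟨hq.surjective_map_of_monodromy_eq_id e₀ hmon,
    hq.bijective_of_monodromy_eq_id hmon e₀ rfl⟩

theorem stmt10 {Y : Type u} [MetricSpace Y] [CompleteSpace Y] [ProperSpace Y]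
    (hlen : IsLengthSpace Y) (y₀ : Y) (k : ℝ) (hk : 0 < k)
    (htriv : ∀ r, 0 < r → ∀ δ, 0 < δ → DeltaTrivial y₀ r ((k + 1) * r) δ) :
    ∀ (E : Type u) [TopologicalSpace E] [PathConnectedSpace E] (q : E → Y)
      (hq : IsCoveringMap q) (e₀ : E), q e₀ = y₀ →
      Function.Surjective (indHom ⟨q, hq.continuous⟩ e₀) ∧ Function.Bijective q :=
  stmt10_general hlen y₀ k htriv
end
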